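/- Fix a ≤ b ≤ n^(1/4), a ≥ 3, and let M be a random n × n Boolean matrix with rows independent uniform r-subsets of [n], r < n^0.01, p = r/n. Then the probability that there exists an a × b submatrix of M in which every one of the b columns contains at least three 1's is at most C(n,a)·C(n,b)·(C(a,3)·p³)^b ≤ (r³/n^(1/4))^b. -/

import Mathlib

/-- The sample space for a random `n × n` Boolean matrix whose rows are independent
uniformly random `r`-subsets of `[n]`: a choice of an `r`-subset for each row. -/
abbrev Omega (n r : ℕ) := Fin n → {s : Finset (Fin n) // s.card = r}

/-- The Boolean matrix determined by a sample point: `M i j = 1` iff `j` lies in the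
`r`-subset chosen for row `i`. -/
def sample {n r : ℕ} (ω : Omega n r) (i j : Fin n) : Bool := decide (j ∈ (ω i).1)

/-- The probability of an event under the uniform distribution on `Omega n r`. -/
noncomputable def prob (n r : ℕ) (P : Omega n r → Prop) : ℝ :=
  (Nat.card {ω : Omega n r // P ω} : ℝ) / (Fintype.card (Omega n r))

/-- Expectation of a real random variable under the uniform distribution on `Omega n r`. -/
noncomputable def expect (n r : ℕ) (X : Omega n r → ℝ) : ℝ :=
  (∑ ω : Omega n r, X ω) / (Fintype.card (Omega n r))

section Helpers
open Finset

private lemma descFact_key {n r : ℕ} (t : ℕ) (hrn : r ≤ n) :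
    r.descFactorial t * n ^ t ≤ n.descFactorial t * r ^ t := by
  have hpow : ∀ m : ℕ, m ^ t = ∏ _i ∈ Finset.range t, m := fun m => by
    rw [Finset.prod_const, Finset.card_range]
  rw [Nat.descFactorial_eq_prod_range, Nat.descFactorial_eq_prod_range, hpow n, hpow r,
    ← Finset.prod_mul_distrib, ← Finset.prod_mul_distrib]
  apply Finset.prod_le_prod'
  intro i _
  rcases le_or_gt i r with h | h
  · calc (r - i) * n = r * n - i * n := by rw [Nat.sub_mul]
      _ ≤ r * n - i * r := Nat.sub_le_sub_left (Nat.mul_le_mul_left i hrn) _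
      _ = (n - i) * r := by rw [Nat.sub_mul, Nat.mul_comm r n]
  · simp [Nat.sub_eq_zero_of_le h.le]

private lemma choose_key {n r : ℕ} (t : ℕ) (htr : t ≤ r) (hrn : r ≤ n) :
    (n - t).choose (r - t) * n ^ t ≤ n.choose r * r ^ t := by
  have h2 : r.choose t * n ^ t ≤ n.choose t * r ^ t := by
    have h1 := descFact_key (n := n) (r := r) t hrn
    rw [Nat.descFactorial_eq_factorial_mul_choose, Nat.descFactorial_eq_factorial_mul_choose,
      mul_assoc, mul_assoc] at h1
    exact Nat.le_of_mul_le_mul_left h1 t.factorial_pos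
  have hpos : 0 < n.choose t := Nat.choose_pos (htr.trans hrn)
  have hid := Nat.choose_mul (n := n) htr
  refine Nat.le_of_mul_le_mul_left ?_ hpos
  calc n.choose t * ((n - t).choose (r - t) * n ^ t)
      = (n.choose r * r.choose t) * n ^ t := by rw [← mul_assoc, ← hid]
    _ = n.choose r * (r.choose t * n ^ t) := by ring
    _ ≤ n.choose r * (n.choose t * r ^ t) := Nat.mul_le_mul_left _ h2
    _ = n.choose t * (n.choose r * r ^ t) := by ring

private lemma card_pi_filter {n : ℕ} {X : Type*} [Fintype X] [DecidableEq X]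
    (Q : Fin n → X → Prop) [∀ i x, Decidable (Q i x)] :
    (Finset.univ.filter fun ω : Fin n → X => ∀ i, Q i (ω i)).card
      = ∏ i, (Finset.univ.filter fun x => Q i x).card := by
  classical
  have h : Fintype.card {ω : (∀ _ : Fin n, X) // ∀ i, Q i (ω i)}
      = ∏ i : Fin n, Fintype.card {x : X // Q i x} := by
    rw [Fintype.card_congr (Equiv.subtypePiEquivPi), Fintype.card_pi]
  simpa [Fintype.card_subtype] using h

private lemma count_superset (n r : ℕ) (T : Finset (Fin n)) :
    (Finset.univ.filter fun s : {s : Finset (Fin n) // s.card = r} => T ⊆ s.1).card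
      ≤ (n - T.card).choose (r - T.card) := by
  classical
  have := Finset.card_le_card_of_injOn
    (f := fun s : {s : Finset (Fin n) // s.card = r} => s.1 \ T)
    (s := Finset.univ.filter fun s : {s : Finset (Fin n) // s.card = r} => T ⊆ s.1)
    (t := Tᶜ.powersetCard (r - T.card)) ?_ ?_
  · calc _ ≤ (Tᶜ.powersetCard (r - T.card)).card := this
      _ = _ := by rw [Finset.card_powersetCard, Finset.card_compl, Fintype.card_fin]
  · intro s hs
    rw [Finset.mem_coe, Finset.mem_filter] at hs
    rw [Finset.mem_coe, Finset.mem_powersetCard]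
    refine ⟨fun x hx => ?_, ?_⟩
    · rw [Finset.mem_sdiff] at hx; simpa using hx.2
    · rw [Finset.card_sdiff_of_subset hs.2, s.2]
  · intro s hs u hu h
    rw [Finset.mem_coe, Finset.mem_filter] at hs hu
    apply Subtype.ext
    rw [← Finset.sdiff_union_of_subset hs.2, ← Finset.sdiff_union_of_subset hu.2]
    simp only at h
    rw [h]

private lemma div_div_le {a b c : ℝ} (h : a ≤ b) (hc : 0 ≤ c) : a / c ≤ b / c := by
  rcases hc.eq_or_lt with rfl | hc
  · simp
  · exact (div_le_div_iff_of_pos_right hc).2 h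

private lemma prob_eq_card (n r : ℕ) (P : Omega n r → Prop) [DecidablePred P] :
    prob n r P = ((Finset.univ.filter P).card : ℝ) / (Fintype.card (Omega n r)) := by
  unfold prob
  rw [Nat.card_eq_fintype_card, Fintype.card_subtype]

private lemma prob_mono {n r : ℕ} {P Q : Omega n r → Prop} (h : ∀ ω, P ω → Q ω) :
    prob n r P ≤ prob n r Q := by
  classical
  rw [prob_eq_card, prob_eq_card]
  refine div_div_le ?_ (by positivity)
  exact_mod_cast Finset.card_le_card (Finset.monotone_filter_right _ (fun ω _ => h ω))

private lemma prob_le_sum {n r : ℕ} {ι : Type*} [DecidableEq ι] (I : Finset ι)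
    (P : ι → Omega n r → Prop) :
    prob n r (fun ω => ∃ x ∈ I, P x ω) ≤ ∑ x ∈ I, prob n r (P x) := by
  classical
  simp only [prob_eq_card]
  rw [← Finset.sum_div]
  refine div_div_le ?_ (by positivity)
  have h1 : (Finset.univ.filter fun ω : Omega n r => ∃ x ∈ I, P x ω)
      ⊆ I.biUnion (fun x => Finset.univ.filter (P x)) := by
    intro ω hω
    rw [Finset.mem_filter] at hω
    obtain ⟨x, hx, hPx⟩ := hω.2
    exact Finset.mem_biUnion.2 ⟨x, hx, Finset.mem_filter.2 ⟨Finset.mem_univ _, hPx⟩⟩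
  calc ((Finset.univ.filter fun ω : Omega n r => ∃ x ∈ I, P x ω).card : ℝ)
      ≤ ((I.biUnion fun x => Finset.univ.filter (P x)).card : ℝ) := by
        exact_mod_cast Finset.card_le_card h1
    _ ≤ ∑ x ∈ I, ((Finset.univ.filter (P x)).card : ℝ) := by
        exact_mod_cast Finset.card_biUnion_le

private lemma row_bound {n r : ℕ} (hn : 0 < n) (hrn : r ≤ n) (T : Finset (Fin n)) :
    ((Finset.univ.filter fun s : {s : Finset (Fin n) // s.card = r} => T ⊆ s.1).card : ℝ)
      ≤ (n.choose r : ℝ) * ((r : ℝ) / n) ^ T.card := by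
  classical
  by_cases htr : T.card ≤ r
  · have h3 : (Finset.univ.filter fun s : {s : Finset (Fin n) // s.card = r} => T ⊆ s.1).card
        * n ^ T.card ≤ n.choose r * r ^ T.card :=
      le_trans (Nat.mul_le_mul_right _ (count_superset n r T)) (choose_key T.card htr hrn)
    have h4 : ((Finset.univ.filter fun s : {s : Finset (Fin n) // s.card = r} => T ⊆ s.1).card : ℝ)
        * (n : ℝ) ^ T.card ≤ (n.choose r : ℝ) * (r : ℝ) ^ T.card := by exact_mod_cast h3
    have hnp : (0 : ℝ) < (n : ℝ) ^ T.card := by positivity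
    rw [div_pow, ← mul_div_assoc, le_div_iff₀ hnp]
    linarith
  · have he : (Finset.univ.filter fun s : {s : Finset (Fin n) // s.card = r} => T ⊆ s.1) = ∅ := by
      rw [Finset.filter_eq_empty_iff]
      intro s _
      intro hsub
      exact htr (s.2 ▸ Finset.card_le_card hsub)
    rw [he]
    simp only [Finset.card_empty, Nat.cast_zero]
    positivity

private lemma prob_pi_le {n r : ℕ} (hn : 0 < n) (hrn : r ≤ n) (T : Fin n → Finset (Fin n)) :
    prob n r (fun ω => ∀ i, T i ⊆ (ω i).1) ≤ ((r : ℝ) / n) ^ (∑ i, (T i).card) := by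
  classical
  have hC : 0 < n.choose r := Nat.choose_pos hrn
  rw [prob_eq_card]
  have hcard := card_pi_filter (X := {s : Finset (Fin n) // s.card = r})
    (fun i s => T i ⊆ s.1)
  rw [hcard]
  have hΩ : (Fintype.card (Omega n r) : ℝ) = ∏ _i : Fin n, (n.choose r : ℝ) := by
    rw [Fintype.card_fun, Fintype.card_finset_len, Fintype.card_fin]
    push_cast
    rw [Finset.prod_const, Finset.card_univ, Fintype.card_fin]
  rw [hΩ]
  push_cast
  rw [← Finset.prod_div_distrib, ← Finset.prod_pow_eq_pow_sum]
  apply Finset.prod_le_prod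
  · intro i _; positivity
  · intro i _
    rw [div_le_iff₀ (by exact_mod_cast hC)]
    calc ((Finset.univ.filter fun s : {s : Finset (Fin n) // s.card = r} => T i ⊆ s.1).card : ℝ)
        ≤ (n.choose r : ℝ) * ((r : ℝ) / n) ^ (T i).card := row_bound hn hrn (T i)
      _ = _ := by ring

private lemma event_bound {n r a b : ℕ} (hn : 0 < n) (hrn : r ≤ n)
    {A B : Finset (Fin n)} (hA : A.card = a) (hB : B.card = b) :
    prob n r (fun ω => ∀ j ∈ B, 3 ≤ (A.filter fun i => sample ω i j = true).card)
      ≤ ((a.choose 3 : ℝ) * ((r : ℝ) / n) ^ 3) ^ b := by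
  classical
  set DD : Finset (Fin n → Finset (Fin n)) :=
    Finset.univ.filter (fun S => ∀ j, (j ∈ B → S j ⊆ A ∧ (S j).card = 3) ∧ (j ∉ B → S j = ∅))
    with hDD
  -- cardinality of DD
  have hDDcard : DD.card = (a.choose 3) ^ b := by
    rw [hDD, card_pi_filter (X := Finset (Fin n))
      (Q := fun j t => (j ∈ B → t ⊆ A ∧ t.card = 3) ∧ (j ∉ B → t = ∅))]
    have hfac : ∀ j : Fin n,
        (Finset.univ.filter fun t : Finset (Fin n) =>
          (j ∈ B → t ⊆ A ∧ t.card = 3) ∧ (j ∉ B → t = ∅)).card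
        = if j ∈ B then a.choose 3 else 1 := by
      intro j
      by_cases hj : j ∈ B
      · rw [if_pos hj]
        have : (Finset.univ.filter fun t : Finset (Fin n) =>
            (j ∈ B → t ⊆ A ∧ t.card = 3) ∧ (j ∉ B → t = ∅)) = A.powersetCard 3 := by
          ext t
          simp [hj, Finset.mem_powersetCard]
        rw [this, Finset.card_powersetCard, hA]
      · rw [if_neg hj]
        have : (Finset.univ.filter fun t : Finset (Fin n) =>
            (j ∈ B → t ⊆ A ∧ t.card = 3) ∧ (j ∉ B → t = ∅)) = {∅} := by
          ext t
          simp [hj]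
        rw [this, Finset.card_singleton]
    calc ∏ j, (Finset.univ.filter fun t : Finset (Fin n) =>
          (j ∈ B → t ⊆ A ∧ t.card = 3) ∧ (j ∉ B → t = ∅)).card
        = ∏ j, if j ∈ B then a.choose 3 else 1 := Finset.prod_congr rfl (fun j _ => hfac j)
      _ = (a.choose 3) ^ b := by
          rw [Finset.prod_ite_mem, Finset.univ_inter, Finset.prod_const, hB]
  -- step 1: event implies union over DD
  have hstep1 : prob n r (fun ω => ∀ j ∈ B, 3 ≤ (A.filter fun i => sample ω i j = true).card)
      ≤ prob n r (fun ω => ∃ S ∈ DD, ∀ i, (Finset.univ.filter fun j => i ∈ S j) ⊆ (ω i).1) := by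
    apply prob_mono
    intro ω hω
    have hch : ∀ j, j ∈ B → ∃ t, t ⊆ (A.filter fun i => sample ω i j = true) ∧ t.card = 3 :=
      fun j hj => Finset.exists_subset_card_eq (hω j hj)
    refine ⟨fun j => if hj : j ∈ B then (hch j hj).choose else ∅, ?_, ?_⟩
    · rw [hDD, Finset.mem_filter]
      refine ⟨Finset.mem_univ _, fun j => ⟨fun hj => ?_, fun hj => by simp [hj]⟩⟩
      simp only [dif_pos hj]
      exact ⟨((hch j hj).choose_spec.1).trans (Finset.filter_subset _ _),
        (hch j hj).choose_spec.2⟩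
    · intro i j hij
      simp only [Finset.mem_filter, Finset.mem_univ, true_and] at hij
      by_cases hj : j ∈ B
      · simp only [dif_pos hj] at hij
        have := (hch j hj).choose_spec.1 hij
        rw [Finset.mem_filter] at this
        have := this.2
        rw [sample] at this
        simpa using this
      · simp [dif_neg hj] at hij
  -- step 2: union bound and per-S bound
  have hstep2 : prob n r (fun ω => ∃ S ∈ DD, ∀ i,
        (Finset.univ.filter fun j => i ∈ S j) ⊆ (ω i).1)
      ≤ ∑ _S ∈ DD, (((r : ℝ) / n) ^ 3) ^ b := by
    refine le_trans (prob_le_sum DD _) (Finset.sum_le_sum ?_)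
    intro S hS
    have hsum : ∑ i, (Finset.univ.filter fun j => i ∈ S j).card = 3 * b := by
      have h1 : ∀ i : Fin n, (Finset.univ.filter fun j => i ∈ S j).card
          = ∑ j, if i ∈ S j then 1 else 0 := fun i => Finset.card_filter _ _
      rw [Finset.sum_congr rfl (fun i _ => h1 i), Finset.sum_comm]
      have h2 : ∀ j : Fin n, (∑ i, if i ∈ S j then 1 else 0) = (S j).card := by
        intro j
        rw [← Finset.card_filter, Finset.filter_univ_mem]
      rw [Finset.sum_congr rfl (fun j _ => h2 j)]
      rw [hDD, Finset.mem_filter] at hS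
      have h3 : ∀ j : Fin n, (S j).card = if j ∈ B then 3 else 0 := by
        intro j
        by_cases hj : j ∈ B
        · rw [if_pos hj]; exact ((hS.2 j).1 hj).2
        · rw [if_neg hj, (hS.2 j).2 hj, Finset.card_empty]
      rw [Finset.sum_congr rfl (fun j _ => h3 j), Finset.sum_ite_mem,
        Finset.univ_inter, Finset.sum_const, hB, smul_eq_mul, mul_comm]
    calc prob n r _ ≤ ((r : ℝ) / n) ^ (∑ i, (Finset.univ.filter fun j => i ∈ S j).card) :=
          prob_pi_le hn hrn _
      _ = (((r : ℝ) / n) ^ 3) ^ b := by rw [hsum, pow_mul]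
  calc prob n r _ ≤ _ := hstep1
    _ ≤ ∑ _S ∈ DD, (((r : ℝ) / n) ^ 3) ^ b := hstep2
    _ = (DD.card : ℝ) * (((r : ℝ) / n) ^ 3) ^ b := by
        rw [Finset.sum_const, nsmul_eq_mul]
    _ = ((a.choose 3 : ℝ) * ((r : ℝ) / n) ^ 3) ^ b := by
        rw [hDDcard, mul_pow]
        push_cast
        ring

/-- Fix `3 ≤ a ≤ b ≤ n^(1/4)` and let `M` be a random `n × n` Boolean matrix with rows
independent uniform `r`-subsets of `[n]`, `r < n^(0.01)`, `p = r/n`. The probability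
that some `a × b` submatrix of `M` has at least three `1`'s in every one of its `b`
columns is at most `C(n,a)·C(n,b)·(C(a,3)·p³)^b`, which is at most `(r³/n^(1/4))^b`. -/
theorem dense_submatrix_probability (n r a b : ℕ) (ha : 3 ≤ a) (hab : a ≤ b)
    (hb : (b : ℝ) ≤ (n : ℝ) ^ ((1 : ℝ) / 4)) (hr : (r : ℝ) < (n : ℝ) ^ (0.01 : ℝ)) :
    prob n r (fun ω => ∃ A B : Finset (Fin n), A.card = a ∧ B.card = b ∧
        ∀ j ∈ B, 3 ≤ (A.filter fun i => sample ω i j = true).card) ≤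
      (n.choose a : ℝ) * (n.choose b) * ((a.choose 3 : ℝ) * ((r : ℝ) / n) ^ 3) ^ b ∧
    (n.choose a : ℝ) * (n.choose b) * ((a.choose 3 : ℝ) * ((r : ℝ) / n) ^ 3) ^ b ≤
      ((r : ℝ) ^ 3 / (n : ℝ) ^ ((1 : ℝ) / 4)) ^ b := by
  classical
  set q : ℝ := (n : ℝ) ^ ((1 : ℝ) / 4) with hq
  have hq3 : (3 : ℝ) ≤ q := le_trans (by exact_mod_cast ha.trans hab) hb
  have hn : 0 < n := by
    by_contra h
    push_neg at h
    interval_cases n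
    rw [hq, Nat.cast_zero, Real.zero_rpow (by norm_num)] at hq3
    linarith
  have hn1 : (1 : ℝ) ≤ (n : ℝ) := by exact_mod_cast hn
  have hrn : r ≤ n := by
    have : (r : ℝ) < (n : ℝ) := by
      calc (r : ℝ) < (n : ℝ) ^ (0.01 : ℝ) := hr
        _ ≤ (n : ℝ) ^ (1 : ℝ) := Real.rpow_le_rpow_of_exponent_le hn1 (by norm_num)
        _ = (n : ℝ) := Real.rpow_one _
    exact_mod_cast this.le
  have hq0 : 0 < q := by linarith
  have hq4 : q ^ 4 = (n : ℝ) := by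
    rw [hq, ← Real.rpow_natCast ((n : ℝ) ^ ((1:ℝ)/4)) 4, ← Real.rpow_mul (by positivity)]
    norm_num
  constructor
  · -- union bound part
    have h1 : prob n r (fun ω => ∃ A B : Finset (Fin n), A.card = a ∧ B.card = b ∧
          ∀ j ∈ B, 3 ≤ (A.filter fun i => sample ω i j = true).card)
        ≤ prob n r (fun ω => ∃ A ∈ Finset.univ.powersetCard a,
            ∃ B ∈ Finset.univ.powersetCard b,
            ∀ j ∈ B, 3 ≤ (A.filter fun i => sample ω i j = true).card) := by
      apply prob_mono
      rintro ω ⟨A, B, hA, hB, h⟩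
      exact ⟨A, Finset.mem_powersetCard_univ.2 hA, B, Finset.mem_powersetCard_univ.2 hB, h⟩
    refine le_trans h1 ?_
    refine le_trans (prob_le_sum _ _) ?_
    have h2 : ∀ A ∈ Finset.univ.powersetCard a (α := Fin n),
        prob n r (fun ω => ∃ B ∈ Finset.univ.powersetCard b,
            ∀ j ∈ B, 3 ≤ (A.filter fun i => sample ω i j = true).card)
        ≤ (n.choose b : ℝ) * ((a.choose 3 : ℝ) * ((r : ℝ) / n) ^ 3) ^ b := by
      intro A hA
      rw [Finset.mem_powersetCard_univ] at hA
      refine le_trans (prob_le_sum _ _) ?_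
      have h3 : ∀ B ∈ Finset.univ.powersetCard b (α := Fin n),
          prob n r (fun ω => ∀ j ∈ B, 3 ≤ (A.filter fun i => sample ω i j = true).card)
          ≤ ((a.choose 3 : ℝ) * ((r : ℝ) / n) ^ 3) ^ b := by
        intro B hB
        rw [Finset.mem_powersetCard_univ] at hB
        exact event_bound hn hrn hA hB
      refine le_trans (Finset.sum_le_sum h3) ?_
      rw [Finset.sum_const, nsmul_eq_mul, Finset.card_powersetCard, Finset.card_univ,
        Fintype.card_fin]
    refine le_trans (Finset.sum_le_sum h2) ?_
    rw [Finset.sum_const, nsmul_eq_mul, Finset.card_powersetCard, Finset.card_univ,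
      Fintype.card_fin, ← mul_assoc]
  · -- numeric part
    have hfac : (n : ℝ) * ((n : ℝ) * ((a.choose 3 : ℝ) * ((r : ℝ) / n) ^ 3))
        ≤ (r : ℝ) ^ 3 / q := by
      have hC : (a.choose 3 : ℝ) ≤ q ^ 3 := by
        calc (a.choose 3 : ℝ) ≤ (a : ℝ) ^ 3 := by exact_mod_cast Nat.choose_le_pow a 3
          _ ≤ (b : ℝ) ^ 3 := by
              have hab' : (a : ℝ) ≤ (b : ℝ) := by exact_mod_cast hab
              gcongr
          _ ≤ q ^ 3 := by gcongr
      have hr0 : (0 : ℝ) ≤ (r : ℝ) := by positivity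
      rw [← hq4]
      have key : q ^ 4 * (q ^ 4 * ((a.choose 3 : ℝ) * ((r : ℝ) / q ^ 4) ^ 3))
          = (a.choose 3 : ℝ) * (r : ℝ) ^ 3 / q ^ 4 := by
        field_simp
      rw [key, div_le_div_iff₀ (by positivity) hq0]
      calc (a.choose 3 : ℝ) * (r : ℝ) ^ 3 * q ≤ q ^ 3 * (r : ℝ) ^ 3 * q := by
            have h1 : (a.choose 3 : ℝ) * (r : ℝ) ^ 3 ≤ q ^ 3 * (r : ℝ) ^ 3 :=
              mul_le_mul_of_nonneg_right hC (by positivity)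
            exact mul_le_mul_of_nonneg_right h1 hq0.le
        _ = (r : ℝ) ^ 3 * q ^ 4 := by ring
    calc (n.choose a : ℝ) * (n.choose b : ℝ) * ((a.choose 3 : ℝ) * ((r : ℝ) / n) ^ 3) ^ b
        ≤ ((n : ℝ) ^ b) * ((n : ℝ) ^ b) * ((a.choose 3 : ℝ) * ((r : ℝ) / n) ^ 3) ^ b := by
          have hca : (n.choose a : ℝ) ≤ (n : ℝ) ^ b := by
            calc (n.choose a : ℝ) ≤ (n : ℝ) ^ a := by exact_mod_cast Nat.choose_le_pow n a
              _ ≤ (n : ℝ) ^ b := pow_le_pow_right₀ hn1 hab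
          have hcb : (n.choose b : ℝ) ≤ (n : ℝ) ^ b := by
            exact_mod_cast Nat.choose_le_pow n b
          have hnn : (0 : ℝ) ≤ ((a.choose 3 : ℝ) * ((r : ℝ) / n) ^ 3) ^ b := by positivity
          have h0a : (0 : ℝ) ≤ (n.choose a : ℝ) := by positivity
          have h0b : (0 : ℝ) ≤ (n.choose b : ℝ) := by positivity
          apply mul_le_mul_of_nonneg_right _ hnn
          exact mul_le_mul hca hcb h0b (by positivity)
      _ = ((n : ℝ) * ((n : ℝ) * ((a.choose 3 : ℝ) * ((r : ℝ) / n) ^ 3))) ^ b := by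
          rw [← mul_pow, ← mul_pow]
          ring_nf
      _ ≤ ((r : ℝ) ^ 3 / q) ^ b := by
          apply pow_le_pow_left₀ _ hfac
          positivity

end Helpers
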